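/- arXiv:0710.0689 — 2 statements merged into one kernel-verified Lean document; each statement's English description precedes it below -/
import Mathlib

section
/- Hahn–Banach–Kantorovich theorem: if E is a Dedekind-complete lattice-ordered real vector space, X a real vector space, Y ⊆ X a subspace, p : X → E sublinear, and T₀ : Y → E linear with T₀ y ≤ p y for all y ∈ Y, then there is a linear extension T : X → E of T₀ with T x ≤ p x for all x ∈ X. -/
open Submodule LinearPMap

theorem hahn_banach_kantorovich {X E : Type*} [AddCommGroup X] [Module ℝ X]
    [AddCommGroup E] [Lattice E] [Module ℝ E]
    [CovariantClass E E (· + ·) (· ≤ ·)] [PosSMulMono ℝ E]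
    (hcomplete : ∀ S : Set E, S.Nonempty → BddAbove S → ∃ s, IsLUB S s)
    (Y : Submodule ℝ X) (p : X → E)
    (hadd : ∀ x y, p (x + y) ≤ p x + p y)
    (hhom : ∀ (l : ℝ) (x : X), 0 ≤ l → p (l • x) = l • p x)
    (T₀ : Y →ₗ[ℝ] E) (hT₀ : ∀ y : Y, T₀ y ≤ p (Y.subtype y)) :
    ∃ T : X →ₗ[ℝ] E, (∀ y : Y, T (Y.subtype y) = T₀ y) ∧ ∀ x, T x ≤ p x := by
  classical
  set F₀ : X →ₗ.[ℝ] E := ⟨Y, T₀⟩ with hF₀def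
  set S : Set (X →ₗ.[ℝ] E) := {f | F₀ ≤ f ∧ ∀ z : f.domain, f z ≤ p z} with hSdef
  have hF₀S : F₀ ∈ S := ⟨le_refl _, fun z => hT₀ z⟩
  obtain ⟨f, hle, hfS, hmax⟩ := zorn_le_nonempty₀ S (fun c hcS hc y hy => by
    have hdirc : DirectedOn (· ≤ ·) c := hc.directedOn
    have hdir : DirectedOn (· ≤ ·) (LinearPMap.domain '' c) := by
      rintro _ ⟨a, ha, rfl⟩ _ ⟨b, hb, rfl⟩
      obtain ⟨k, hk, hak, hbk⟩ := hdirc a ha b hb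
      exact ⟨k.domain, ⟨k, hk, rfl⟩, hak.1, hbk.1⟩
    refine ⟨LinearPMap.sSup c hdirc, ⟨?_, ?_⟩, fun z hz => LinearPMap.le_sSup hdirc hz⟩
    · exact le_trans (hcS hy).1 (LinearPMap.le_sSup hdirc hy)
    · intro z
      have hz2 : (z : X) ∈ sSup (LinearPMap.domain '' c) := z.2
      obtain ⟨_, ⟨a, hac, rfl⟩, hza⟩ :=
        (Submodule.mem_sSup_of_directed (s := LinearPMap.domain '' c) ⟨_, ⟨y, hy, rfl⟩⟩ hdir).1 hz2
      have h1 : LinearPMap.sSup c hdirc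
            (⟨(z : X), (LinearPMap.le_sSup hdirc hac).1 hza⟩ :
              (LinearPMap.sSup c hdirc).domain) =
          a ⟨(z : X), hza⟩ := LinearPMap.sSup_apply hdirc hac ⟨(z : X), hza⟩
      have h2 : LinearPMap.sSup c hdirc z = a ⟨(z : X), hza⟩ := by
        rw [← h1]
      rw [h2]; exact (hcS hac).2 ⟨(z : X), hza⟩) F₀ hF₀S
  -- show that the maximal element has full domain
  have hdom : f.domain = ⊤ := by
    by_contra hne
    obtain ⟨x, hx⟩ : ∃ x, x ∉ f.domain := by
      by_contra h
      push_neg at h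
      exact hne (Submodule.eq_top_iff'.2 h)
    -- key inequality
    have hkey : ∀ y z : f.domain, f y - p ((y : X) - x) ≤ p ((z : X) + x) - f z := by
      intro y z
      rw [sub_le_sub_iff]
      calc f y + f z = f (y + z) := (f.map_add y z).symm
        _ ≤ p ((y : X) + (z : X)) := hfS.2 (y + z)
        _ = p (((z : X) + x) + ((y : X) - x)) := by congr 1; abel
        _ ≤ p ((z : X) + x) + p ((y : X) - x) := hadd _ _
    set A : Set E := Set.range (fun y : f.domain => f y - p ((y : X) - x)) with hA
    have hbdd : BddAbove A := by
      refine ⟨p (((0 : f.domain) : X) + x) - f 0, ?_⟩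
      rintro _ ⟨y, rfl⟩
      exact hkey y 0
    obtain ⟨cc, hlub⟩ := hcomplete A ⟨_, Set.mem_range_self 0⟩ hbdd
    have hub : ∀ y : f.domain, f y - p ((y : X) - x) ≤ cc :=
      fun y => hlub.1 (Set.mem_range_self y)
    have hlb : ∀ z : f.domain, cc ≤ p ((z : X) + x) - f z := by
      intro z
      refine hlub.2 ?_
      rintro _ ⟨y, rfl⟩
      exact hkey y z
    set g := f.supSpanSingleton x cc hx with hg
    have hfg : f ≤ g := f.left_le_sup _ _
    have hgS : g ∈ S := by
      refine ⟨le_trans hfS.1 hfg, ?_⟩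
      intro z
      have hz : (z : X) ∈ f.domain ⊔ ℝ ∙ x := z.2
      obtain ⟨y', hy', w, hw, hsum⟩ := Submodule.mem_sup.1 hz
      obtain ⟨t, rfl⟩ := Submodule.mem_span_singleton.1 hw
      have hz2 : z = ⟨y' + t • x,
          Submodule.mem_sup.2 ⟨y', hy', _, Submodule.mem_span_singleton.2 ⟨t, rfl⟩, rfl⟩⟩ :=
        Subtype.ext hsum.symm
      rw [hz2, supSpanSingleton_apply_mk]
      show f ⟨y', hy'⟩ + t • cc ≤ p (y' + t • x)
      rcases lt_trichotomy t 0 with ht | ht | ht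
      · have hs : (0 : ℝ) < -t := by linarith
        set y'' : f.domain := (-t)⁻¹ • ⟨y', hy'⟩ with hy''
        have h2 : (-t) • (f y'' - p ((y'' : X) - x)) ≤ (-t) • cc :=
          smul_le_smul_of_nonneg_left (hub y'') hs.le
        have e1 : (-t) • f y'' = f ⟨y', hy'⟩ := by
          rw [← f.map_smul, hy'', smul_inv_smul₀ (ne_of_gt hs)]
        have e2 : (-t) • p ((y'' : X) - x) = p (y' - (-t) • x) := by
          rw [← hhom _ _ hs.le]
          congr 1
          rw [hy'', Submodule.coe_smul, smul_sub, smul_inv_smul₀ (ne_of_gt hs)]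
        rw [smul_sub, e1, e2] at h2
        have e3 : t • cc = -((-t) • cc) := by rw [neg_smul, neg_neg]
        have e4 : y' + t • x = y' - (-t) • x := by rw [neg_smul, sub_neg_eq_add]
        rw [e3, e4, ← sub_eq_add_neg, sub_le_iff_le_add, add_comm]
        exact sub_le_iff_le_add.mp h2
      · subst ht
        simpa using hfS.2 ⟨y', hy'⟩
      · set y'' : f.domain := t⁻¹ • ⟨y', hy'⟩ with hy''
        have h2 : t • cc ≤ t • (p ((y'' : X) + x) - f y'') :=
          smul_le_smul_of_nonneg_left (hlb y'') ht.le
        have e1 : t • f y'' = f ⟨y', hy'⟩ := by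
          rw [← f.map_smul, hy'', smul_inv_smul₀ (ne_of_gt ht)]
        have e2 : t • p ((y'' : X) + x) = p (y' + t • x) := by
          rw [← hhom _ _ ht.le]
          congr 1
          rw [hy'', Submodule.coe_smul, smul_add, smul_inv_smul₀ (ne_of_gt ht)]
        rw [smul_sub, e1, e2] at h2
        rw [add_comm]
        exact le_sub_iff_add_le.mp h2
    have hgf : g ≤ f := hmax hgS hfg
    exact hx (hgf.1 (by
      show x ∈ f.domain ⊔ ℝ ∙ x
      exact Submodule.mem_sup_right (Submodule.mem_span_singleton_self x)))
  have hmem : ∀ x : X, x ∈ f.domain := fun x => hdom.symm ▸ Submodule.mem_top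
  refine ⟨{ toFun := fun x => f ⟨x, hmem x⟩
            map_add' := fun a b => by
              rw [← f.map_add]; exact congrArg _ (Subtype.ext rfl)
            map_smul' := fun r a => by
              simp only [RingHom.id_apply]
              rw [← f.map_smul]; exact congrArg _ (Subtype.ext rfl) }, ?_, ?_⟩
  · intro y
    have := hle.2 (x := y) (y := ⟨Y.subtype y, hmem _⟩) rfl
    exact this.symm
  · intro x
    exact hfS.2 ⟨x, hmem x⟩
end

section
/- Subdifferential sum rule (Moreau–Rockafellar, everywhere-finite case): if p, q : X → ℝ are sublinear functionals on a real vector space, then ∂(p + q)(0) = ∂p(0) + ∂q(0). -/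
/-!
A functional `l ≤ p + q` is dominated on the diagonal of `X × X` by the sublinear functional
`(x, y) ↦ p x + q y`. Hahn–Banach extends `l`, read on the diagonal, to a functional `g` on all of
`X × X` still dominated by it; then `g (x, 0) ≤ p x`, `g (0, y) ≤ q y` and `g (x, 0) + g (0, x) = g (x, x) = l x`.
-/

open Pointwise

theorem map_zero_of_nonneg_homogeneous {E : Type*} [AddCommGroup E] [Module ℝ E] {p : E → ℝ}
    (hp : ∀ (c : ℝ) (x : E), 0 ≤ c → p (c • x) = c * p x) : p 0 = 0 := by
  simpa using hp 0 0 le_rfl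

theorem exists_extension_along_injective_of_le_sublinear {E F : Type*}
    [AddCommGroup E] [Module ℝ E] [AddCommGroup F] [Module ℝ F]
    (d : E →ₗ[ℝ] F) (hd : Function.Injective d) (N : F → ℝ)
    (N_hom : ∀ c : ℝ, 0 < c → ∀ y, N (c • y) = c * N y)
    (N_add : ∀ y z, N (y + z) ≤ N y + N z)
    (l : E →ₗ[ℝ] ℝ) (hl : ∀ x, l x ≤ N (d x)) :
    ∃ g : F →ₗ[ℝ] ℝ, g ∘ₗ d = l ∧ ∀ y, g y ≤ N y := by
  let e := LinearEquiv.ofInjective d hd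
  let f : F →ₗ.[ℝ] ℝ := ⟨LinearMap.range d, l ∘ₗ e.symm.toLinearMap⟩
  have hf : ∀ x, f (e x) = l x := fun x => by simp [f]
  obtain ⟨g, hgf, hgN⟩ := exists_extension_of_le_sublinear f N N_hom N_add fun y => by
    obtain ⟨x, rfl⟩ := e.surjective y
    simpa [hf, e] using hl x
  refine ⟨g, LinearMap.ext fun x => ?_, hgN⟩
  simpa [hf, e] using hgf (e x)

section SumOfSublinear

variable {X : Type*} [AddCommGroup X] {p q : X → ℝ}

theorem add_prod_homogeneous [Module ℝ X]
    (hphom : ∀ (c : ℝ) (x : X), 0 ≤ c → p (c • x) = c * p x)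
    (hqhom : ∀ (c : ℝ) (x : X), 0 ≤ c → q (c • x) = c * q x) (c : ℝ) (hc : 0 < c)
    (v : X × X) : p (c • v).1 + q (c • v).2 = c * (p v.1 + q v.2) := by
  rw [Prod.smul_fst, Prod.smul_snd, hphom c _ hc.le, hqhom c _ hc.le, mul_add]

theorem add_prod_subadditive (hpadd : ∀ x y, p (x + y) ≤ p x + p y)
    (hqadd : ∀ x y, q (x + y) ≤ q x + q y) (v w : X × X) :
    p (v + w).1 + q (v + w).2 ≤ (p v.1 + q v.2) + (p w.1 + q w.2) := by
  rw [Prod.fst_add, Prod.snd_add]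
  linarith [hpadd v.1 w.1, hqadd v.2 w.2]

theorem exists_add_eq_of_le_add [Module ℝ X]
    (hpadd : ∀ x y, p (x + y) ≤ p x + p y)
    (hphom : ∀ (c : ℝ) (x : X), 0 ≤ c → p (c • x) = c * p x)
    (hqadd : ∀ x y, q (x + y) ≤ q x + q y)
    (hqhom : ∀ (c : ℝ) (x : X), 0 ≤ c → q (c • x) = c * q x)
    (l : X →ₗ[ℝ] ℝ) (hl : ∀ x, l x ≤ p x + q x) :
    ∃ l₁ l₂ : X →ₗ[ℝ] ℝ, (∀ x, l₁ x ≤ p x) ∧ (∀ x, l₂ x ≤ q x) ∧ l₁ + l₂ = l := by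
  obtain ⟨g, hgl, hgN⟩ := exists_extension_along_injective_of_le_sublinear
    (LinearMap.id.prod LinearMap.id) (fun x y h => congrArg Prod.fst h)
    (fun v => p v.1 + q v.2) (add_prod_homogeneous hphom hqhom)
    (add_prod_subadditive hpadd hqadd) l hl
  refine ⟨g ∘ₗ LinearMap.inl ℝ X X, g ∘ₗ LinearMap.inr ℝ X X, fun x => ?_, fun x => ?_, ?_⟩
  · simpa [map_zero_of_nonneg_homogeneous hqhom] using hgN (x, 0)
  · simpa [map_zero_of_nonneg_homogeneous hphom] using hgN (0, x)
  · rw [← hgl]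
    ext x
    simp [← map_add]

end SumOfSublinear

theorem subdiff_sum_rule {X : Type*} [AddCommGroup X] [Module ℝ X]
    (p q : X → ℝ)
    (hpadd : ∀ x y, p (x + y) ≤ p x + p y)
    (hphom : ∀ (l : ℝ) (x : X), 0 ≤ l → p (l • x) = l * p x)
    (hqadd : ∀ x y, q (x + y) ≤ q x + q y)
    (hqhom : ∀ (l : ℝ) (x : X), 0 ≤ l → q (l • x) = l * q x) :
    {l : X →ₗ[ℝ] ℝ | ∀ x, l x ≤ p x + q x} =
      {l : X →ₗ[ℝ] ℝ | ∀ x, l x ≤ p x} + {l : X →ₗ[ℝ] ℝ | ∀ x, l x ≤ q x} := by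
  ext l
  constructor
  · intro hl
    obtain ⟨l₁, l₂, hl₁, hl₂, rfl⟩ := exists_add_eq_of_le_add hpadd hphom hqadd hqhom l hl
    exact Set.add_mem_add hl₁ hl₂
  · rintro ⟨l₁, hl₁, l₂, hl₂, rfl⟩ x
    exact add_le_add (hl₁ x) (hl₂ x)
end
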